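/- arXiv:1507.00148 — 7 statements merged into one kernel-verified Lean document; each statement's English description precedes it below -/
import Mathlib

section
/- Let n ≥ 1 and let V be a Lie subalgebra of the elementary filiform Lie algebra f_{n+2} that is not abelian. Then there exist an index i with 2 ≤ i ≤ n+1 and an element t₁ in the linear span of e₂, …, e_{i−1} (with t₁ = 0 when i = 2) such that V equals the linear span of {e₁ + t₁, e_i, e_{i+1}, …, e_{n+2}}. -/
/-!
Write `D = ad e₁`. The span `A` of `e₂, …, e_{n+2}` is an abelian ideal on which `D` is a single
nilpotent Jordan block: it maps each `e_j` to a nonzero multiple of `e_{j+1}`. A non-abelian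
subalgebra `V` cannot lie in `A`, so it contains some `x = e₁ + u` with `u ∈ A`, and then
`V = ℝ x ⊕ (V ∩ A)`. Since `ad x = D` on `A`, the subspace `V ∩ A` is `D`-invariant, and the only
`D`-invariant subspaces of `A` are the tails `span {e_k, …, e_{n+2}}` of the flag: if `w` has
leading index `k`, then `D w, D² w, …` have leading indices `k+1, k+2, …`, which forces every
`e_j` with `j ≥ k` into the subspace. Non-abelianness excludes the tails killed by `D`.
-/

open Submodule

section TailSpan

variable (K : Type*) {M : Type*} [Field K] [AddCommGroup M] [Module K M] {N : ℕ}

def tailSpan (e : Fin N → M) (m : ℕ) : Submodule K M :=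
  span K (e '' {j | m ≤ (j : ℕ)})

variable {K} {e : Fin N → M}

theorem apply_mem_tailSpan {m : ℕ} {j : Fin N} (h : m ≤ (j : ℕ)) : e j ∈ tailSpan K e m :=
  subset_span ⟨j, h, rfl⟩

theorem tailSpan_zero (hspan : span K (Set.range e) = ⊤) : tailSpan K e 0 = ⊤ := by
  simpa [tailSpan, Set.image_univ] using hspan

theorem tailSpan_eq_bot {m : ℕ} (hm : N ≤ m) : tailSpan K e m = ⊥ := by
  rw [tailSpan, span_eq_bot]
  rintro _ ⟨j, hj, rfl⟩
  exact absurd j.isLt (by simp only [Set.mem_ofPred_eq] at hj; omega)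

theorem tailSpan_mono {m k : ℕ} (h : m ≤ k) : tailSpan K e k ≤ tailSpan K e m :=
  span_mono (Set.image_mono fun j (hj : k ≤ (j : ℕ)) => (h.trans hj : m ≤ (j : ℕ)))

theorem tailSpan_eq_sup {m : ℕ} (hm : m < N) :
    tailSpan K e m = K ∙ e ⟨m, hm⟩ ⊔ tailSpan K e (m + 1) := by
  rw [tailSpan, tailSpan, ← span_insert, ← Set.image_insert_eq]
  congr 2
  ext j
  simp only [Set.mem_ofPred_eq, Set.mem_insert_iff, Fin.ext_iff]
  omega

theorem tailSpan_eq_span_sup {m k : ℕ} (h : m ≤ k) :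
    tailSpan K e m = span K (e '' {j | m ≤ (j : ℕ) ∧ (j : ℕ) < k}) ⊔ tailSpan K e k := by
  rw [tailSpan, tailSpan, ← span_union, ← Set.image_union]
  congr 2
  ext j
  simp only [Set.mem_ofPred_eq, Set.mem_union]
  omega

theorem span_singleton_sup_tailSpan_one {e : Fin (N + 1) → M}
    (hspan : span K (Set.range e) = ⊤) : K ∙ e 0 ⊔ tailSpan K e 1 = ⊤ :=
  (tailSpan_eq_sup (m := 0) N.succ_pos).symm.trans (tailSpan_zero hspan)

theorem apply_notMem_tailSpan_succ (hindep : LinearIndependent K e) {m : ℕ} (hm : m < N) :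
    e ⟨m, hm⟩ ∉ tailSpan K e (m + 1) :=
  hindep.notMem_span_image (by simp)

/-- `hD` and `hlead` say that `D` lowers the flag by one step and, from level `m` on, maps each
one-dimensional quotient `tailSpan j / tailSpan (j + 1)` isomorphically onto the next. -/
theorem tailSpan_le_of_mem_of_notMem (hindep : LinearIndependent K e) {D : M →ₗ[K] M}
    (hD : ∀ m, ∀ x ∈ tailSpan K e m, D x ∈ tailSpan K e (m + 1))
    {W : Submodule K M} (hW : ∀ w ∈ W, D w ∈ W) {m : ℕ}
    (hlead : ∀ j (hj : j + 1 < N), m ≤ j → D (e ⟨j, by omega⟩) ∉ tailSpan K e (j + 2))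
    {w : M} (hwW : w ∈ W) (hw : w ∈ tailSpan K e m) (hw' : w ∉ tailSpan K e (m + 1)) :
    tailSpan K e m ≤ W := by
  have hmN : m < N := by
    by_contra! h
    rw [tailSpan_eq_bot h, mem_bot] at hw
    exact hw' (hw ▸ zero_mem _)
  obtain ⟨_, ha, r, hr, rfl⟩ := mem_sup.1 (by rwa [tailSpan_eq_sup hmN] at hw)
  obtain ⟨a, rfl⟩ := mem_span_singleton.1 ha
  have ha : a ≠ 0 := by
    rintro rfl
    exact hw' (by simpa using hr)
  have hsucc : tailSpan K e (m + 1) ≤ W := by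
    by_cases h : m + 1 < N
    · refine tailSpan_le_of_mem_of_notMem hindep hD hW (fun j hj hmj => hlead j hj (by omega))
        (hW _ hwW) (hD _ _ hw) fun hDw => hlead m h le_rfl ?_
      -- `D r` already lies one step further down, so the leading term of `D w` is `a • D e_m`.
      have : a • D (e ⟨m, hmN⟩) = D (a • e ⟨m, hmN⟩ + r) - D r := by
        rw [map_add, map_smul, add_sub_cancel_right]
      rw [← smul_mem_iff _ ha, this]
      exact sub_mem hDw (hD _ _ hr)
    · rw [tailSpan_eq_bot (by omega)]
      exact bot_le
  have hem : a • e ⟨m, hmN⟩ ∈ W := by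
    simpa using sub_mem hwW (hsucc hr)
  rw [tailSpan_eq_sup hmN]
  exact sup_le ((span_singleton_le_iff_mem _ _).2 ((smul_mem_iff _ ha).1 hem)) hsucc
termination_by N - m

theorem exists_eq_tailSpan_of_invariant (hindep : LinearIndependent K e) {D : M →ₗ[K] M}
    (hD : ∀ m, ∀ x ∈ tailSpan K e m, D x ∈ tailSpan K e (m + 1))
    {W : Submodule K M} (hW : ∀ w ∈ W, D w ∈ W) {m₀ : ℕ}
    (hlead : ∀ j (hj : j + 1 < N), m₀ ≤ j → D (e ⟨j, by omega⟩) ∉ tailSpan K e (j + 2))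
    (hW₀ : W ≤ tailSpan K e m₀) (hne : W ≠ ⊥) :
    ∃ k, m₀ ≤ k ∧ k < N ∧ W = tailSpan K e k := by
  classical
  have hle_bot : ∀ m, N ≤ m → ¬ W ≤ tailSpan K e m := fun m hm h =>
    hne (eq_bot_iff.2 (h.trans (tailSpan_eq_bot hm).le))
  have hm₀N : m₀ ≤ N := by
    by_contra! h
    exact hle_bot m₀ h.le hW₀
  set P : ℕ → Prop := fun m => W ≤ tailSpan K e m
  set k := Nat.findGreatest P N
  have hk : W ≤ tailSpan K e k := Nat.findGreatest_spec (P := P) hm₀N hW₀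
  have hkN : k < N := lt_of_le_of_ne (Nat.findGreatest_le N) fun h => hle_bot k h.ge hk
  obtain ⟨w, hwW, hw⟩ := SetLike.not_le_iff_exists.1
    (Nat.findGreatest_is_greatest (Nat.lt_succ_self k) hkN : ¬ W ≤ tailSpan K e (k + 1))
  have hm₀k : m₀ ≤ k := Nat.le_findGreatest (P := P) hm₀N hW₀
  exact ⟨k, hm₀k, hkN, le_antisymm hk (tailSpan_le_of_mem_of_notMem hindep hD hW
    (fun j hj hkj => hlead j hj (hm₀k.trans hkj)) hwW (hk hwW) hw)⟩

end TailSpan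

section AbelianIdeal

variable {K L : Type*} [Field K] [LieRing L] [LieAlgebra K L]

theorem lie_eq_zero_of_mem_span {S : Set L} (h : ∀ x ∈ S, ∀ y ∈ S, ⁅x, y⁆ = 0) {x y : L}
    (hx : x ∈ span K S) (hy : y ∈ span K S) : ⁅x, y⁆ = 0 := by
  have hker : ∀ z ∈ S, span K S ≤ LinearMap.ker (LieAlgebra.ad K L z) := fun z hz =>
    span_le.2 fun w hw => h z hz w hw
  have hy' : span K S ≤ LinearMap.ker (LieAlgebra.ad K L y) := span_le.2 fun z hz => by
    have hzy : ⁅z, y⁆ = 0 := hker z hz hy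
    show ⁅y, z⁆ = 0
    rw [← lie_skew, hzy, neg_zero]
  have hyx : ⁅y, x⁆ = 0 := hy' hx
  rw [← lie_skew, hyx, neg_zero]

variable {e₀ : L} {A : Submodule K L}

theorem exists_smul_add_eq (hL : K ∙ e₀ ⊔ A = ⊤) (x : L) : ∃ a : K, ∃ r ∈ A, a • e₀ + r = x := by
  obtain ⟨_, hy, r, hr, rfl⟩ := mem_sup.1 (hL ▸ mem_top : x ∈ K ∙ e₀ ⊔ A)
  obtain ⟨a, rfl⟩ := mem_span_singleton.1 hy
  exact ⟨a, r, hr, rfl⟩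

theorem lie_eq_lie_of_sub_mem (hA : ∀ x ∈ A, ∀ y ∈ A, ⁅x, y⁆ = 0) {x w : L} (hx : x - e₀ ∈ A)
    (hw : w ∈ A) : ⁅x, w⁆ = ⁅e₀, w⁆ := by
  rw [← sub_eq_zero, ← sub_lie]
  exact hA _ hx _ hw

theorem exists_mem_sub_mem_of_lie_ne_zero (hA : ∀ x ∈ A, ∀ y ∈ A, ⁅x, y⁆ = 0)
    (hL : K ∙ e₀ ⊔ A = ⊤) (V : LieSubalgebra K L) (hV : ∃ x ∈ V, ∃ y ∈ V, ⁅x, y⁆ ≠ 0) :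
    ∃ x ∈ V, x - e₀ ∈ A := by
  by_contra! h
  have hVA : ∀ v ∈ V, v ∈ A := by
    intro v hv
    obtain ⟨a, r, hr, rfl⟩ := exists_smul_add_eq hL v
    by_cases ha : a = 0
    · simpa [ha] using hr
    · have hsub : a⁻¹ • (a • e₀ + r) - e₀ = a⁻¹ • r := by
        rw [smul_add, smul_smul, inv_mul_cancel₀ ha, one_smul, add_sub_cancel_left]
      exact absurd (hsub ▸ A.smul_mem a⁻¹ hr) (h _ (V.smul_mem a⁻¹ hv))
  obtain ⟨x, hx, y, hy, hxy⟩ := hV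
  exact hxy (hA x (hVA x hx) y (hVA y hy))

theorem toSubmodule_eq_span_singleton_sup_inf (hL : K ∙ e₀ ⊔ A = ⊤) (V : LieSubalgebra K L)
    {x : L} (hx : x ∈ V) (hxA : x - e₀ ∈ A) :
    V.toSubmodule = K ∙ x ⊔ (V.toSubmodule ⊓ A) := by
  refine le_antisymm (fun v hv => ?_) (sup_le ((span_singleton_le_iff_mem _ _).2 hx) inf_le_left)
  obtain ⟨a, r, hr, rfl⟩ := exists_smul_add_eq hL v
  have hrest : a • e₀ + r - a • x ∈ V.toSubmodule ⊓ A :=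
    ⟨sub_mem hv (V.smul_mem a hx), by
      rw [show a • e₀ + r - a • x = r - a • (x - e₀) by rw [smul_sub]; abel]
      exact A.sub_mem hr (A.smul_mem a hxA)⟩
  simpa using mem_sup.2 ⟨a • x, mem_span_singleton.2 ⟨a, rfl⟩, _, hrest, add_sub_cancel _ _⟩

theorem lie_mem_inf (hA : ∀ x ∈ A, ∀ y ∈ A, ⁅x, y⁆ = 0) (hAinv : ∀ y ∈ A, ⁅e₀, y⁆ ∈ A)
    (V : LieSubalgebra K L) {x : L} (hx : x ∈ V) (hxA : x - e₀ ∈ A) {w : L}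
    (hw : w ∈ V.toSubmodule ⊓ A) : ⁅e₀, w⁆ ∈ V.toSubmodule ⊓ A :=
  ⟨lie_eq_lie_of_sub_mem hA hxA hw.2 ▸ V.lie_mem hx hw.1, hAinv w hw.2⟩

theorem exists_mem_inf_lie_ne_zero (hA : ∀ x ∈ A, ∀ y ∈ A, ⁅x, y⁆ = 0) (hL : K ∙ e₀ ⊔ A = ⊤)
    (V : LieSubalgebra K L) {x : L} (hx : x ∈ V) (hxA : x - e₀ ∈ A)
    (hV : ∃ x ∈ V, ∃ y ∈ V, ⁅x, y⁆ ≠ 0) : ∃ w ∈ V.toSubmodule ⊓ A, ⁅e₀, w⁆ ≠ 0 := by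
  by_contra! h
  have hdecomp : ∀ v ∈ V, ∃ a : K, ∃ w ∈ V.toSubmodule ⊓ A, a • x + w = v := fun v hv => by
    obtain ⟨_, hy, w, hw, rfl⟩ :=
      mem_sup.1 (by rw [← toSubmodule_eq_span_singleton_sup_inf hL V hx hxA]; exact hv)
    obtain ⟨a, rfl⟩ := mem_span_singleton.1 hy
    exact ⟨a, w, hw, rfl⟩
  have hxw : ∀ w ∈ V.toSubmodule ⊓ A, ⁅x, w⁆ = 0 := fun w hw =>
    (lie_eq_lie_of_sub_mem hA hxA hw.2).trans (h w hw)
  obtain ⟨_, hX, _, hY, hXY⟩ := hV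
  obtain ⟨a, w, hw, rfl⟩ := hdecomp _ hX
  obtain ⟨b, w', hw', rfl⟩ := hdecomp _ hY
  apply hXY
  simp [← lie_skew w x, hxw w hw, hxw w' hw', hA w hw.2 w' hw'.2]

end AbelianIdeal

theorem exists_toSubmodule_eq_span_insert {K L : Type*} [Field K] [LieRing L] [LieAlgebra K L]
    {N : ℕ} {e : Fin (N + 1) → L} (hL : K ∙ e 0 ⊔ tailSpan K e 1 = ⊤) (V : LieSubalgebra K L)
    {x : L} (hx : x ∈ V) (hxA : x - e 0 ∈ tailSpan K e 1) {k : ℕ} (hk : 1 ≤ k)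
    (hW : V.toSubmodule ⊓ tailSpan K e 1 = tailSpan K e k) :
    ∃ t ∈ span K (e '' {j | 1 ≤ (j : ℕ) ∧ (j : ℕ) < k}),
      V.toSubmodule = span K (insert (e 0 + t) (e '' {j | k ≤ (j : ℕ)})) := by
  have hsplit := tailSpan_eq_span_sup (K := K) (e := e) hk
  obtain ⟨t, ht, r, hr, hxtr⟩ := mem_sup.1 (hsplit ▸ hxA)
  have htA : t ∈ tailSpan K e 1 := hsplit ▸ mem_sup_left ht
  have hx' : e 0 + t ∈ V := by
    have hrV : r ∈ V := (hW ▸ hr : r ∈ V.toSubmodule ⊓ _).1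
    have hxr : x - r = e 0 + t := by rw [← sub_add_cancel x (e 0), ← hxtr]; abel
    exact hxr ▸ V.sub_mem hx hrV
  refine ⟨t, ht, ?_⟩
  rw [toSubmodule_eq_span_singleton_sup_inf hL V hx' (by simpa using htA), hW, span_insert]
  rfl

section Filiform

variable {n : ℕ} {L : Type*} [LieRing L] [LieAlgebra ℝ L] {e : Fin (n + 2) → L}

theorem lie_mem_tailSpan_succ
    (hbr : ∀ j (hj : j + 1 < n + 2), 1 ≤ j →
      ⁅e 0, e ⟨j, by omega⟩⁆ = ((n + 1 - j : ℕ) : ℝ) • e ⟨j + 1, hj⟩)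
    (hlast : ⁅e 0, e (Fin.last (n + 1))⁆ = 0) {m : ℕ} {x : L} (hx : x ∈ tailSpan ℝ e m) :
    ⁅e 0, x⁆ ∈ tailSpan ℝ e (m + 1) := by
  refine (span_le.2 ?_ : tailSpan ℝ e m ≤ (tailSpan ℝ e (m + 1)).comap
    (LieAlgebra.ad ℝ L (e 0))) hx
  rintro _ ⟨j, hj, rfl⟩
  simp only [Set.mem_ofPred_eq] at hj
  show ⁅e 0, e j⁆ ∈ tailSpan ℝ e (m + 1)
  obtain ⟨j, hjN⟩ := j
  rcases Nat.eq_zero_or_pos j with rfl | hj1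
  · rw [show (⟨0, hjN⟩ : Fin (n + 2)) = 0 from rfl, lie_self]
    exact zero_mem _
  by_cases hjn : j ≤ n
  · rw [hbr j (by omega) hj1]
    exact smul_mem _ _ (apply_mem_tailSpan (by dsimp only at hj ⊢; omega))
  · obtain rfl : j = n + 1 := by omega
    have hlast' : ⁅e 0, e ⟨n + 1, hjN⟩⁆ = 0 := hlast
    rw [hlast']
    exact zero_mem _

theorem lie_notMem_tailSpan (hindep : LinearIndependent ℝ e)
    (hbr : ∀ j (hj : j + 1 < n + 2), 1 ≤ j →
      ⁅e 0, e ⟨j, by omega⟩⁆ = ((n + 1 - j : ℕ) : ℝ) • e ⟨j + 1, hj⟩)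
    {j : ℕ} (hj : j + 1 < n + 2) (hj1 : 1 ≤ j) :
    ⁅e 0, e ⟨j, by omega⟩⁆ ∉ tailSpan ℝ e (j + 2) := by
  rw [hbr j hj hj1, smul_mem_iff _ (by rw [Nat.cast_ne_zero]; omega)]
  exact apply_notMem_tailSpan_succ hindep hj

theorem lie_eq_zero_of_mem_tailSpan_last (hlast : ⁅e 0, e (Fin.last (n + 1))⁆ = 0) {x : L}
    (hx : x ∈ tailSpan ℝ e (n + 1)) : ⁅e 0, x⁆ = 0 := by
  refine (span_le.2 ?_ : tailSpan ℝ e (n + 1) ≤ LinearMap.ker (LieAlgebra.ad ℝ L (e 0))) hx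
  rintro _ ⟨⟨j, hjN⟩, hj, rfl⟩
  obtain rfl : j = n + 1 := by simp only [Set.mem_ofPred_eq] at hj; omega
  exact hlast

theorem lie_eq_zero_of_mem_tailSpan_one
    (hzero : ∀ i j : Fin (n + 2), (i : ℕ) ≠ 0 → (j : ℕ) ≠ 0 → ⁅e i, e j⁆ = 0) {x y : L}
    (hx : x ∈ tailSpan ℝ e 1) (hy : y ∈ tailSpan ℝ e 1) : ⁅x, y⁆ = 0 := by
  refine lie_eq_zero_of_mem_span ?_ hx hy
  rintro _ ⟨i, hi, rfl⟩ _ ⟨j, hj, rfl⟩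
  exact hzero i j (Nat.one_le_iff_ne_zero.1 hi) (Nat.one_le_iff_ne_zero.1 hj)

end Filiform

/-- For `n ≥ 1`, let `L` be the elementary filiform Lie algebra `f_{n+2}` over `ℝ`,
given by a basis `e 0, e 1, …, e (n+1)` (corresponding to `e₁, …, e_{n+2}`) with
`⁅e₁, eᵢ⁆ = (n+2−i) e_{i+1}` for `2 ≤ i ≤ n+1` and all other brackets of basis
elements zero.  If `V` is a non-abelian Lie subalgebra of `L`, then there is an
index `i` with `2 ≤ i ≤ n+1` and an element `t₁` in the span of `e₂, …, e_{i−1}`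
such that `V` is the span of `{e₁ + t₁, e_i, e_{i+1}, …, e_{n+2}}`. -/
theorem stmt0
    (n : ℕ)
    (L : Type) [LieRing L] [LieAlgebra ℝ L]
    (e : Fin (n + 2) → L)
    (hindep : LinearIndependent ℝ e)
    (hspan : Submodule.span ℝ (Set.range e) = ⊤)
    (hbr : ∀ j : Fin (n + 2), ∀ _h1 : 1 ≤ (j : ℕ), ∀ _h2 : (j : ℕ) ≤ n,
      ⁅e 0, e j⁆ = ((n + 1 - (j : ℕ) : ℕ) : ℝ) • e ⟨(j : ℕ) + 1, by omega⟩)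
    (hlast : ⁅e 0, e ⟨n + 1, by omega⟩⁆ = 0)
    (hzero : ∀ i j : Fin (n + 2), (i : ℕ) ≠ 0 → (j : ℕ) ≠ 0 → ⁅e i, e j⁆ = 0)
    (V : LieSubalgebra ℝ L)
    (hV : ∃ x ∈ V, ∃ y ∈ V, ⁅x, y⁆ ≠ 0) :
    ∃ i : ℕ, 2 ≤ i ∧ i ≤ n + 1 ∧
      ∃ t₁ ∈ Submodule.span ℝ
          (e '' {j : Fin (n + 2) | 1 ≤ (j : ℕ) ∧ (j : ℕ) + 2 ≤ i}),
        V.toSubmodule =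
          Submodule.span ℝ
            (insert (e 0 + t₁) (e '' {j : Fin (n + 2) | i ≤ (j : ℕ) + 1})) := by
  have hbr' : ∀ j (hj : j + 1 < n + 2), 1 ≤ j →
      ⁅e 0, e ⟨j, by omega⟩⁆ = ((n + 1 - j : ℕ) : ℝ) • e ⟨j + 1, hj⟩ :=
    fun j _ hj1 => hbr ⟨j, by omega⟩ hj1 (show j ≤ n by omega)
  have hA : ∀ x ∈ tailSpan ℝ e 1, ∀ y ∈ tailSpan ℝ e 1, ⁅x, y⁆ = 0 :=
    fun _ hx _ hy => lie_eq_zero_of_mem_tailSpan_one hzero hx hy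
  have hL := span_singleton_sup_tailSpan_one (K := ℝ) hspan
  obtain ⟨x, hxV, hxA⟩ := exists_mem_sub_mem_of_lie_ne_zero hA hL V hV
  obtain ⟨w₀, hw₀, hDw₀⟩ := exists_mem_inf_lie_ne_zero hA hL V hxV hxA hV
  obtain ⟨k, hk1, hkN, hW⟩ := exists_eq_tailSpan_of_invariant hindep
    (D := LieAlgebra.ad ℝ L (e 0)) (fun _ _ hy => lie_mem_tailSpan_succ hbr' hlast hy)
    (fun w hw => lie_mem_inf hA (fun y hy => tailSpan_mono (Nat.le_succ 1)
      (lie_mem_tailSpan_succ hbr' hlast hy)) V hxV hxA hw)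
    (fun j hj hj1 => lie_notMem_tailSpan hindep hbr' hj hj1) inf_le_right
    ((Submodule.ne_bot_iff _).2 ⟨w₀, hw₀, fun h => hDw₀ (by rw [h, lie_zero])⟩)
  have hkn : k ≤ n := by
    by_contra
    obtain rfl : k = n + 1 := by omega
    exact hDw₀ (lie_eq_zero_of_mem_tailSpan_last hlast (hW ▸ hw₀))
  obtain ⟨t₁, ht₁, hVeq⟩ := exists_toSubmodule_eq_span_insert hL V hxV hxA hk1 hW
  refine ⟨k + 1, by omega, by omega, t₁, ?_, ?_⟩
  · rwa [show {j : Fin (n + 2) | 1 ≤ (j : ℕ) ∧ (j : ℕ) + 2 ≤ k + 1} =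
        {j : Fin (n + 2) | 1 ≤ (j : ℕ) ∧ (j : ℕ) < k} from
      Set.ext fun j => and_congr_right fun _ => by omega]
  · rw [hVeq]
    congr 3
    exact Set.ext fun j => Nat.add_le_add_iff_right.symm
end

section
/- Let n ≥ 1 and let v₁, …, vₙ : ℝ → ℝ be functions with vᵢ(0) = 0 for all i. Then (ℝ × ℝ, ∗) is a loop: the element (0,0) is a two-sided identity, and for all a, b ∈ ℝ × ℝ there exists a unique y with a ∗ y = b and a unique x with x ∗ a = b. -/
/-! The operation is `(u₁, z₁) ∗ (u₂, z₂) = (u₁ + u₂, z₁ + z₂ + c u₁ u₂)` for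
`c u w = ∑ (-1)ⁱ wⁱ vᵢ(u)`, i.e. addition twisted by a 2-cochain `c`. Such a product is a loop
as soon as `c` is normalized (`c 0 w = 0 = c u 0`): both equations are solved by first fixing the
first coordinate, which the twist does not touch, and then the second, where the twist is a
constant. -/

section TwistedMul

variable {A B : Type*} [AddGroup A] [AddCommGroup B] (c : A → A → B)

def twistedMul (a b : A × B) : A × B :=
  (a.1 + b.1, a.2 + b.2 + c a.1 b.1)

theorem twistedMul_zero_left (hc : ∀ u, c 0 u = 0) (a : A × B) : twistedMul c 0 a = a := by
  simp [twistedMul, hc]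

theorem twistedMul_zero_right (hc : ∀ u, c u 0 = 0) (a : A × B) : twistedMul c a 0 = a := by
  simp [twistedMul, hc]

theorem twistedMul_eq_iff_right {a y b : A × B} :
    twistedMul c a y = b ↔ y = (-a.1 + b.1, b.2 - a.2 - c a.1 (-a.1 + b.1)) := by
  constructor
  · rintro rfl
    ext
    · simp [twistedMul]
    · simp only [twistedMul, neg_add_cancel_left]
      abel
  · rintro rfl
    ext
    · simp [twistedMul]
    · simp only [twistedMul, add_neg_cancel_left]
      abel

theorem twistedMul_eq_iff_left {x a b : A × B} :
    twistedMul c x a = b ↔ x = (b.1 - a.1, b.2 - a.2 - c (b.1 - a.1) a.1) := by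
  constructor
  · rintro rfl
    ext
    · simp [twistedMul]
    · simp only [twistedMul, add_sub_cancel_right]
      abel
  · rintro rfl
    ext
    · simp [twistedMul]
    · simp only [twistedMul, sub_add_cancel]
      abel

theorem existsUnique_twistedMul_eq_right (a b : A × B) : ∃! y, twistedMul c a y = b := by
  simp only [twistedMul_eq_iff_right]
  exact existsUnique_eq

theorem existsUnique_twistedMul_eq_left (a b : A × B) : ∃! x, twistedMul c x a = b := by
  simp only [twistedMul_eq_iff_left]
  exact existsUnique_eq

end TwistedMul

theorem stmt6_general
    (n : ℕ)
    (v : Fin n → ℝ → ℝ) (hv0 : ∀ i, v i 0 = 0)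
    (mul : ℝ × ℝ → ℝ × ℝ → ℝ × ℝ)
    (hmul : ∀ a b : ℝ × ℝ, mul a b =
      (a.1 + b.1,
        a.2 + b.2 + ∑ i : Fin n, (-1 : ℝ) ^ ((i : ℕ) + 1) * b.1 ^ ((i : ℕ) + 1) * v i a.1)) :
    (∀ a : ℝ × ℝ, mul (0, 0) a = a ∧ mul a (0, 0) = a) ∧
      (∀ a b : ℝ × ℝ, (∃! y : ℝ × ℝ, mul a y = b) ∧ (∃! x : ℝ × ℝ, mul x a = b)) := by
  set c : ℝ → ℝ → ℝ := fun u w => ∑ i : Fin n, (-1 : ℝ) ^ ((i : ℕ) + 1) * w ^ ((i : ℕ) + 1) * v i u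
  obtain rfl : mul = twistedMul c := funext₂ hmul
  have hc_left : ∀ w, c 0 w = 0 := by simp [c, hv0]
  have hc_right : ∀ u, c u 0 = 0 := by simp [c]
  exact ⟨fun a => ⟨twistedMul_zero_left c hc_left a, twistedMul_zero_right c hc_right a⟩,
    fun a b => ⟨existsUnique_twistedMul_eq_right c a b, existsUnique_twistedMul_eq_left c a b⟩⟩

/-- For `n ≥ 1` and functions `v₁, …, vₙ : ℝ → ℝ` with `vᵢ(0) = 0` (here
`v i = v_{i+1}` for `i : Fin n`), the operation
`(u₁,z₁) ∗ (u₂,z₂) = (u₁+u₂, z₁+z₂ − u₂ v₁(u₁) + u₂² v₂(u₁) + ⋯ + (−1)ⁿ u₂ⁿ vₙ(u₁))`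
makes `ℝ × ℝ` a loop: `(0,0)` is a two-sided identity and the equations
`a ∗ y = b` and `x ∗ a = b` have unique solutions. -/
theorem stmt6
    (n : ℕ) (hn : 1 ≤ n)
    (v : Fin n → ℝ → ℝ) (hv0 : ∀ i, v i 0 = 0)
    (mul : ℝ × ℝ → ℝ × ℝ → ℝ × ℝ)
    (hmul : ∀ a b : ℝ × ℝ, mul a b =
      (a.1 + b.1,
        a.2 + b.2 + ∑ i : Fin n, (-1 : ℝ) ^ ((i : ℕ) + 1) * b.1 ^ ((i : ℕ) + 1) * v i a.1)) :
    (∀ a : ℝ × ℝ, mul (0, 0) a = a ∧ mul a (0, 0) = a) ∧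
      (∀ a b : ℝ × ℝ, (∃! y : ℝ × ℝ, mul a y = b) ∧ (∃! x : ℝ × ℝ, mul x a = b)) :=
  stmt6_general n v hv0 mul hmul
end

section
/- Let n ≥ 1 and let v₁, …, vₙ : ℝ → ℝ be continuous functions with vᵢ(0) = 0 for all i. Then (ℝ × ℝ, ∗) is a topological loop: the map (a, b) ↦ a ∗ b is continuous, the map sending (a, b) to the unique y with a ∗ y = b is continuous, the map sending (a, b) to the unique x with x ∗ a = b is continuous, and for each a ∈ ℝ × ℝ the left translation λ_a : x ↦ a ∗ x and the right translation ρ_a : x ↦ x ∗ a are homeomorphisms of ℝ × ℝ. -/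
/-- For `n ≥ 1` and continuous `v₁, …, vₙ : ℝ → ℝ` with `vᵢ(0) = 0`, the loop
operation `∗` on `ℝ × ℝ` is a topological loop: multiplication is continuous,
left division `(a, b) ↦ a \ b` and right division `(a, b) ↦ b / a` are
continuous, and all left and right translations are homeomorphisms. -/
theorem stmt7
    (n : ℕ) (hn : 1 ≤ n)
    (v : Fin n → ℝ → ℝ) (hv0 : ∀ i, v i 0 = 0) (hvc : ∀ i, Continuous (v i))
    (mul : ℝ × ℝ → ℝ × ℝ → ℝ × ℝ)
    (hmul : ∀ a b : ℝ × ℝ, mul a b =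
      (a.1 + b.1,
        a.2 + b.2 + ∑ i : Fin n, (-1 : ℝ) ^ ((i : ℕ) + 1) * b.1 ^ ((i : ℕ) + 1) * v i a.1)) :
    Continuous (fun p : (ℝ × ℝ) × (ℝ × ℝ) => mul p.1 p.2) ∧
      (∃ ld : (ℝ × ℝ) × (ℝ × ℝ) → ℝ × ℝ, Continuous ld ∧
        ∀ a b : ℝ × ℝ, mul a (ld (a, b)) = b ∧ ∀ y, mul a y = b → y = ld (a, b)) ∧
      (∃ rd : (ℝ × ℝ) × (ℝ × ℝ) → ℝ × ℝ, Continuous rd ∧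
        ∀ a b : ℝ × ℝ, mul (rd (a, b)) a = b ∧ ∀ x, mul x a = b → x = rd (a, b)) ∧
      (∀ a : ℝ × ℝ,
        IsHomeomorph (fun x : ℝ × ℝ => mul a x) ∧
        IsHomeomorph (fun x : ℝ × ℝ => mul x a)) := by
  set S : ℝ → ℝ → ℝ := fun u1 u2 =>
    ∑ i : Fin n, (-1 : ℝ) ^ ((i : ℕ) + 1) * u2 ^ ((i : ℕ) + 1) * v i u1 with hS
  have hSc : Continuous (fun p : ℝ × ℝ => S p.1 p.2) := by
    apply continuous_finset_sum
    intro i _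
    exact (continuous_const.mul ((continuous_snd.pow _))).mul ((hvc i).comp continuous_fst)
  have hmul' : ∀ a b : ℝ × ℝ, mul a b = (a.1 + b.1, a.2 + b.2 + S a.1 b.1) := hmul
  have hcont : Continuous (fun p : (ℝ × ℝ) × (ℝ × ℝ) => mul p.1 p.2) := by
    have : (fun p : (ℝ × ℝ) × (ℝ × ℝ) => mul p.1 p.2)
        = fun p => (p.1.1 + p.2.1, p.1.2 + p.2.2 + S p.1.1 p.2.1) := by
      funext p; exact hmul' p.1 p.2
    rw [this]
    refine Continuous.prodMk (by fun_prop) ?_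
    exact ((continuous_fst.snd.add continuous_snd.snd).add
      (hSc.comp (continuous_fst.fst.prodMk continuous_snd.fst)))
  -- left division
  set ld : (ℝ × ℝ) × (ℝ × ℝ) → ℝ × ℝ :=
    fun p => (p.2.1 - p.1.1, p.2.2 - p.1.2 - S p.1.1 (p.2.1 - p.1.1)) with hld
  have hldc : Continuous ld := by
    refine Continuous.prodMk (by fun_prop) ?_
    exact (continuous_snd.snd.sub continuous_fst.snd).sub
      (hSc.comp (continuous_fst.fst.prodMk (continuous_snd.fst.sub continuous_fst.fst)))
  have hldprop : ∀ a b : ℝ × ℝ, mul a (ld (a, b)) = b ∧ ∀ y, mul a y = b → y = ld (a, b) := by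
    intro a b
    constructor
    · rw [hmul']; simp [hld]; ring_nf
    · intro y hy
      rw [hmul'] at hy
      have h1 : a.1 + y.1 = b.1 := congrArg Prod.fst hy
      have h2 : a.2 + y.2 + S a.1 y.1 = b.2 := congrArg Prod.snd hy
      have hy1 : y.1 = b.1 - a.1 := by linarith
      have : y.2 = b.2 - a.2 - S a.1 (b.1 - a.1) := by rw [← hy1]; linarith
      simp [hld, ← hy1, this]
      exact Prod.ext rfl (by rw [this, hy1])
  -- right division
  set rd : (ℝ × ℝ) × (ℝ × ℝ) → ℝ × ℝ :=
    fun p => (p.2.1 - p.1.1, p.2.2 - p.1.2 - S (p.2.1 - p.1.1) p.1.1) with hrd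
  have hrdc : Continuous rd := by
    refine Continuous.prodMk (by fun_prop) ?_
    exact (continuous_snd.snd.sub continuous_fst.snd).sub
      (hSc.comp ((continuous_snd.fst.sub continuous_fst.fst).prodMk continuous_fst.fst))
  have hrdprop : ∀ a b : ℝ × ℝ, mul (rd (a, b)) a = b ∧ ∀ x, mul x a = b → x = rd (a, b) := by
    intro a b
    constructor
    · rw [hmul']; simp [hrd]; ring_nf
    · intro x hx
      rw [hmul'] at hx
      have h1 : x.1 + a.1 = b.1 := congrArg Prod.fst hx
      have h2 : x.2 + a.2 + S x.1 a.1 = b.2 := congrArg Prod.snd hx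
      have hx1 : x.1 = b.1 - a.1 := by linarith
      have : x.2 = b.2 - a.2 - S (b.1 - a.1) a.1 := by rw [← hx1]; linarith
      simp [hrd, ← hx1, this]
      exact Prod.ext rfl (by rw [this, hx1])
  refine ⟨hcont, ⟨ld, hldc, hldprop⟩, ⟨rd, hrdc, hrdprop⟩, ?_⟩
  intro a
  constructor
  · exact (Homeomorph.mk
      ⟨fun x => mul a x, fun b => ld (a, b),
        fun x => ((hldprop a (mul a x)).2 x rfl).symm,
        fun b => (hldprop a b).1⟩
      (hcont.comp (continuous_const.prodMk continuous_id))
      (hldc.comp (continuous_const.prodMk continuous_id))).isHomeomorph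
  · exact (Homeomorph.mk
      ⟨fun x => mul x a, fun b => rd (a, b),
        fun x => ((hrdprop a (mul x a)).2 x rfl).symm,
        fun b => (hrdprop a b).1⟩
      (hcont.comp (continuous_id.prodMk continuous_const))
      (hrdc.comp (continuous_const.prodMk continuous_id))).isHomeomorph
end

section
/- Let n ≥ 1 and let v₁, …, vₙ : ℝ → ℝ be functions with vᵢ(0) = 0 for all i. Then the loop (ℝ × ℝ, ∗) is a central extension of ℝ by ℝ in the following sense: the first projection (u, z) ↦ u is a homomorphism onto (ℝ, +), i.e. π₁(a ∗ b) = π₁(a) + π₁(b) for all a, b; and every element of the form (0, z) is central, i.e. for all z ∈ ℝ and all a, b ∈ ℝ × ℝ one has (0,z) ∗ a = a ∗ (0,z), ((0,z) ∗ a) ∗ b = (0,z) ∗ (a ∗ b), (a ∗ (0,z)) ∗ b = a ∗ ((0,z) ∗ b), and (a ∗ b) ∗ (0,z) = a ∗ (b ∗ (0,z)). -/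
/-- For `n ≥ 1` and `v₁, …, vₙ : ℝ → ℝ` with `vᵢ(0) = 0`, the loop `(ℝ × ℝ, ∗)` is
a central extension of `ℝ` by `ℝ`: the first projection is a homomorphism onto
`(ℝ, +)` and every element `(0, z)` is central. -/
theorem stmt8
    (n : ℕ) (hn : 1 ≤ n)
    (v : Fin n → ℝ → ℝ) (hv0 : ∀ i, v i 0 = 0)
    (mul : ℝ × ℝ → ℝ × ℝ → ℝ × ℝ)
    (hmul : ∀ a b : ℝ × ℝ, mul a b =
      (a.1 + b.1,
        a.2 + b.2 + ∑ i : Fin n, (-1 : ℝ) ^ ((i : ℕ) + 1) * b.1 ^ ((i : ℕ) + 1) * v i a.1)) :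
    (∀ a b : ℝ × ℝ, (mul a b).1 = a.1 + b.1) ∧
      (∀ z : ℝ, ∀ a b : ℝ × ℝ,
        mul (0, z) a = mul a (0, z) ∧
        mul (mul (0, z) a) b = mul (0, z) (mul a b) ∧
        mul (mul a (0, z)) b = mul a (mul (0, z) b) ∧
        mul (mul a b) (0, z) = mul a (mul b (0, z))) := by
  refine ⟨fun a b => by rw [hmul], fun z a b => ?_⟩
  simp only [hmul, hv0]
  refine ⟨?_, ?_, ?_, ?_⟩ <;>
    exact Prod.ext (by ring) (by simp [hv0]; ring)
end

section
/- Let n ≥ 1 and let A = (a_{ij}) be a real n×n matrix, and define v₁, …, vₙ : ℝ → ℝ by vᵢ(x) = a_{i1}x + a_{i2}x² + ⋯ + a_{in}xⁿ. Then the binary operation ∗ on ℝ × ℝ is commutative if and only if a_{ij} = (−1)^{i+j}·a_{ji} for all i, j ∈ {1, …, n}. -/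
open Polynomial in
lemma coeffs_zero_aux {n : ℕ} (g : Fin n → ℝ)
    (h : ∀ x : ℝ, ∑ j : Fin n, g j * x ^ ((j : ℕ) + 1) = 0) :
    ∀ j, g j = 0 := by
  intro j
  set P : ℝ[X] := ∑ k : Fin n, C (g k) * X ^ ((k : ℕ) + 1) with hP
  have hzero : P = 0 := by
    apply Polynomial.funext
    intro x
    simp [hP, Polynomial.eval_finset_sum, h x]
  have h2 := congrArg (fun p => Polynomial.coeff p ((j : ℕ) + 1)) hzero
  simp only [hP, Polynomial.finset_sum_coeff, Polynomial.coeff_C_mul,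
    Polynomial.coeff_X_pow, Polynomial.coeff_zero, mul_ite, mul_one, mul_zero] at h2
  rw [Finset.sum_eq_single j] at h2
  · simpa using h2
  · intro b _ hb
    rw [if_neg]
    simp only [add_left_inj]
    exact fun h' => hb (Fin.ext h'.symm)
  · simp

/-- Let `n ≥ 1`, let `A = (a i j)` be a real `n × n` matrix (indexed by `Fin n`,
zero-based, so `a i j` is the one-based entry `a_{(i+1)(j+1)}`), and define
`vᵢ(x) = a_{i1} x + ⋯ + a_{in} xⁿ`.  Then the loop operation `∗` is commutative
iff `a_{ij} = (−1)^{i+j} a_{ji}` for all one-based `i, j`. -/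
theorem stmt9
    (n : ℕ) (hn : 1 ≤ n)
    (a : Fin n → Fin n → ℝ)
    (v : Fin n → ℝ → ℝ)
    (hv : ∀ i : Fin n, ∀ x : ℝ, v i x = ∑ j : Fin n, a i j * x ^ ((j : ℕ) + 1))
    (mul : ℝ × ℝ → ℝ × ℝ → ℝ × ℝ)
    (hmul : ∀ p q : ℝ × ℝ, mul p q =
      (p.1 + q.1,
        p.2 + q.2 + ∑ i : Fin n, (-1 : ℝ) ^ ((i : ℕ) + 1) * q.1 ^ ((i : ℕ) + 1) * v i p.1)) :
    (∀ p q : ℝ × ℝ, mul p q = mul q p) ↔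
      ∀ i j : Fin n, a i j = (-1 : ℝ) ^ ((i : ℕ) + (j : ℕ)) * a j i := by
  constructor
  · intro hcomm i j
    have key : ∀ x y : ℝ,
        ∑ i : Fin n, (-1 : ℝ) ^ ((i : ℕ) + 1) * y ^ ((i : ℕ) + 1) * v i x
        = ∑ i : Fin n, (-1 : ℝ) ^ ((i : ℕ) + 1) * x ^ ((i : ℕ) + 1) * v i y := by
      intro x y
      have h := hcomm (x, 0) (y, 0)
      rw [hmul, hmul] at h
      have h2 := congrArg Prod.snd h
      simpa using h2
    have step1 : ∀ x : ℝ, ∀ i : Fin n,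
        (∑ k : Fin n, (-1 : ℝ) ^ ((i : ℕ) + 1) * a i k * x ^ ((k : ℕ) + 1))
        - (∑ k : Fin n, (-1 : ℝ) ^ ((k : ℕ) + 1) * a k i * x ^ ((k : ℕ) + 1)) = 0 := by
      intro x
      apply coeffs_zero_aux
      intro y
      have h := key x y
      simp only [hv] at h
      have hL : ∑ i : Fin n, (-1 : ℝ) ^ ((i : ℕ) + 1) * y ^ ((i : ℕ) + 1) *
            (∑ k : Fin n, a i k * x ^ ((k : ℕ) + 1))
          = ∑ i : Fin n, (∑ k : Fin n, (-1 : ℝ) ^ ((i : ℕ) + 1) * a i k * x ^ ((k : ℕ) + 1))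
              * y ^ ((i : ℕ) + 1) := by
        refine Finset.sum_congr rfl (fun i _ => ?_)
        rw [Finset.sum_mul, Finset.mul_sum]
        exact Finset.sum_congr rfl (fun k _ => by ring)
      have hR : ∑ i : Fin n, (-1 : ℝ) ^ ((i : ℕ) + 1) * x ^ ((i : ℕ) + 1) *
            (∑ k : Fin n, a i k * y ^ ((k : ℕ) + 1))
          = ∑ i : Fin n, (∑ k : Fin n, (-1 : ℝ) ^ ((k : ℕ) + 1) * a k i * x ^ ((k : ℕ) + 1))
              * y ^ ((i : ℕ) + 1) := by
        calc ∑ i : Fin n, (-1 : ℝ) ^ ((i : ℕ) + 1) * x ^ ((i : ℕ) + 1) *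
              (∑ k : Fin n, a i k * y ^ ((k : ℕ) + 1))
            = ∑ i : Fin n, ∑ k : Fin n,
                ((-1 : ℝ) ^ ((i : ℕ) + 1) * a i k * x ^ ((i : ℕ) + 1)) * y ^ ((k : ℕ) + 1) := by
              refine Finset.sum_congr rfl (fun i _ => ?_)
              rw [Finset.mul_sum]
              exact Finset.sum_congr rfl (fun k _ => by ring)
          _ = ∑ k : Fin n, ∑ i : Fin n,
                ((-1 : ℝ) ^ ((i : ℕ) + 1) * a i k * x ^ ((i : ℕ) + 1)) * y ^ ((k : ℕ) + 1) :=
              Finset.sum_comm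
          _ = _ := by
              refine Finset.sum_congr rfl (fun k _ => ?_)
              rw [Finset.sum_mul]
      simp only [sub_mul, Finset.sum_sub_distrib]
      exact sub_eq_zero.mpr (hL.symm.trans (h.trans hR))
    have step2 : ∀ k : Fin n,
        (-1 : ℝ) ^ ((i : ℕ) + 1) * a i k - (-1 : ℝ) ^ ((k : ℕ) + 1) * a k i = 0 := by
      apply coeffs_zero_aux
      intro x
      simp only [sub_mul, Finset.sum_sub_distrib]
      have := step1 x i
      simpa [mul_assoc] using this
    have hc := step2 j
    have e1 : (-1 : ℝ) ^ ((i : ℕ) + 1) * (-1 : ℝ) ^ ((j : ℕ) + 1)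
        = (-1 : ℝ) ^ ((i : ℕ) + (j : ℕ)) := by
      rw [← pow_add, show ((i : ℕ) + 1) + ((j : ℕ) + 1) = ((i : ℕ) + (j : ℕ)) + 2 by ring,
        pow_add]
      norm_num
    have e2 : (-1 : ℝ) ^ ((i : ℕ) + 1) * (-1 : ℝ) ^ ((i : ℕ) + 1) = 1 := by
      rw [← pow_add, ← two_mul, pow_mul]
      norm_num
    linear_combination ((-1 : ℝ) ^ ((i : ℕ) + 1)) * hc - a i j * e2 + a j i * e1
  · intro h p q
    rw [hmul, hmul]
    refine Prod.ext (by dsimp; ring) ?_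
    dsimp only
    have hS : ∑ i : Fin n, (-1 : ℝ) ^ ((i : ℕ) + 1) * q.1 ^ ((i : ℕ) + 1) * v i p.1
        = ∑ i : Fin n, (-1 : ℝ) ^ ((i : ℕ) + 1) * p.1 ^ ((i : ℕ) + 1) * v i q.1 := by
      simp only [hv]
      calc ∑ i : Fin n, (-1 : ℝ) ^ ((i : ℕ) + 1) * q.1 ^ ((i : ℕ) + 1) *
            ∑ k : Fin n, a i k * p.1 ^ ((k : ℕ) + 1)
          = ∑ i : Fin n, ∑ k : Fin n,
              (-1 : ℝ) ^ ((k : ℕ) + 1) * a k i * q.1 ^ ((i : ℕ) + 1) * p.1 ^ ((k : ℕ) + 1) := by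
            refine Finset.sum_congr rfl (fun i _ => ?_)
            rw [Finset.mul_sum]
            refine Finset.sum_congr rfl (fun k _ => ?_)
            rw [h i k]
            have e : (-1 : ℝ) ^ ((i : ℕ) + 1) * (-1 : ℝ) ^ ((i : ℕ) + (k : ℕ))
                = (-1 : ℝ) ^ ((k : ℕ) + 1) := by
              rw [← pow_add,
                show ((i : ℕ) + 1) + ((i : ℕ) + (k : ℕ)) = 2 * (i : ℕ) + ((k : ℕ) + 1) by ring,
                pow_add, pow_mul]
              norm_num
            calc (-1 : ℝ) ^ ((i : ℕ) + 1) * q.1 ^ ((i : ℕ) + 1) *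
                  ((-1 : ℝ) ^ ((i : ℕ) + (k : ℕ)) * a k i * p.1 ^ ((k : ℕ) + 1))
                = ((-1 : ℝ) ^ ((i : ℕ) + 1) * (-1 : ℝ) ^ ((i : ℕ) + (k : ℕ))) * a k i *
                    q.1 ^ ((i : ℕ) + 1) * p.1 ^ ((k : ℕ) + 1) := by ring
              _ = _ := by rw [e]
        _ = ∑ k : Fin n, ∑ i : Fin n,
              (-1 : ℝ) ^ ((k : ℕ) + 1) * a k i * q.1 ^ ((i : ℕ) + 1) * p.1 ^ ((k : ℕ) + 1) :=
            Finset.sum_comm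
        _ = ∑ i : Fin n, (-1 : ℝ) ^ ((i : ℕ) + 1) * p.1 ^ ((i : ℕ) + 1) *
              ∑ k : Fin n, a i k * q.1 ^ ((k : ℕ) + 1) := by
            refine Finset.sum_congr rfl (fun k _ => ?_)
            rw [Finset.mul_sum]
            exact Finset.sum_congr rfl (fun i _ => by ring)
    rw [hS]
    ring
end

section
/- Let v₁ : ℝ × ℝ → ℝ be a continuous function. Then the map z ↦ z − u₁·v₁(u₀, z) is a bijection of ℝ for all u₀, u₁ ∈ ℝ if and only if v₁ does not depend on its second variable, i.e. v₁(u, z) = v₁(u, z′) for all u, z, z′ ∈ ℝ. -/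
/-- Let `v₁ : ℝ × ℝ → ℝ` (written curried) be continuous.  Then for all
`u₀, u₁ ∈ ℝ` the map `z ↦ z − u₁ · v₁(u₀, z)` is a bijection of `ℝ` if and
only if `v₁` does not depend on its second variable. -/
theorem stmt11
    (v₁ : ℝ → ℝ → ℝ) (hv : Continuous fun p : ℝ × ℝ => v₁ p.1 p.2) :
    (∀ u₀ u₁ : ℝ, Function.Bijective fun z : ℝ => z - u₁ * v₁ u₀ z) ↔
      ∀ u z z' : ℝ, v₁ u z = v₁ u z' := by
  constructor
  · intro h u z z'
    by_contra hne
    have hd : v₁ u z - v₁ u z' ≠ 0 := sub_ne_zero.mpr hne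
    have hz : z = z' := (h u ((z - z') / (v₁ u z - v₁ u z'))).1 (by
      show z - _ * v₁ u z = z' - _ * v₁ u z'
      field_simp
      ring)
    exact hne (by rw [hz])
  · intro h u₀ u₁
    constructor
    · intro a b hab
      have : v₁ u₀ a = v₁ u₀ b := h u₀ a b
      simp only at hab
      rw [this] at hab
      linarith
    · intro y
      refine ⟨y + u₁ * v₁ u₀ y, ?_⟩
      have : v₁ u₀ (y + u₁ * v₁ u₀ y) = v₁ u₀ y := h u₀ _ _
      simp only [this]
      ring
end

section
/- Let n ≥ 1 and let v₁, …, vₙ : ℝ → ℝ be continuous functions with vᵢ(0) = 0 for all i. The subgroup of the permutation group of ℝ × ℝ generated by all left translations λ_a of ∗ (over all a ∈ ℝ × ℝ) equals the group Mₙ if and only if vₙ is non-linear, i.e. there is no constant c ∈ ℝ with vₙ(u) = c·u for all u ∈ ℝ. -/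
/-!
Write `shear c f` for `(x, y) ↦ (x + c, y + f x)`. The left translation `λ_(u,z)` is
`shear u (z + q_u)` for a polynomial `q_u` of degree `≤ n` whose coefficient of `xⁿ` is
`(-1)ⁿ vₙ(u)`, so the generated group lies in `Mₙ`. Composing polynomial shears adds the
translations and the polynomials up to a Taylor shift, which does not change the coefficient of
`xⁿ`. So if `vₙ(u) = c u`, the relation `(coefficient of xⁿ) = (-1)ⁿ c · (translation)` passes
from the generators to the whole group, and the shear by `xⁿ` is missing.

Conversely, `λ_(u+u')⁻¹ λ_u λ_u'` is a vertical shear whose coefficient of `xⁿ` is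
`(-1)ⁿ (vₙ(u) + vₙ(u') - vₙ(u + u'))`. For nonlinear continuous `vₙ` this is a nonconstant
continuous function of `u`, so these coefficients fill an interval and generate `ℝ`. Conjugating a
vertical shear by `λ_(a,0)` shifts its polynomial to `p(x + a)`, and the finite differences
`p(x + a) - p(x)` reach every lower coefficient; hence all vertical shears of degree `≤ n`, and
with the generators all of `Mₙ`, lie in the group.
-/

open Polynomial

namespace Polynomial

variable {R : Type*} [CommRing R]

lemma coeff_taylor_of_natDegree_le {p : R[X]} {n : ℕ} (hp : p.natDegree ≤ n) (a : R) :
    (taylor a p).coeff n = p.coeff n := by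
  rcases hp.lt_or_eq with hp | rfl
  · rw [coeff_eq_zero_of_natDegree_lt hp,
      coeff_eq_zero_of_natDegree_lt (p := taylor a p) (by rwa [natDegree_taylor])]
  · simp

lemma coeff_taylor_of_natDegree_le_succ {p : R[X]} {k : ℕ} (hp : p.natDegree ≤ k + 1) (a : R) :
    (taylor a p).coeff k = p.coeff k + (k + 1) * p.coeff (k + 1) * a := by
  have hD : hasseDeriv k p = C (p.coeff k) + C ((k + 1) * p.coeff (k + 1)) * X := by
    ext (_ | _ | j)
    · simp [hasseDeriv_coeff]
    · simp [hasseDeriv_coeff, add_comm 1 k, Nat.choose_succ_self_right]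
    · rw [hasseDeriv_coeff, coeff_eq_zero_of_natDegree_lt (by omega)]
      simp [coeff_one]
  rw [taylor_coeff, hD]
  simp

variable {K : Type*} [Field K] [CharZero K] {W : AddSubgroup K[X]}

lemma exists_mem_coeff_eq_of_succ (htaylor : ∀ p ∈ W, ∀ a, taylor a p ∈ W) {k : ℕ}
    (hlead : ∀ t, ∃ p ∈ W, p.natDegree ≤ k + 1 ∧ p.coeff (k + 1) = t) (t : K) :
    ∃ p ∈ W, p.natDegree ≤ k ∧ p.coeff k = t := by
  obtain ⟨p, hpW, hp, hp1⟩ := hlead 1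
  -- The finite difference `p(x + a) - p(x)` drops the degree and has `k`-th coefficient `(k+1) a`.
  refine ⟨taylor (t / (k + 1)) p - p, sub_mem (htaylor p hpW _) hpW, ?_, ?_⟩
  · have hsub : (taylor (t / (k + 1)) p - p).natDegree ≤ k + 1 :=
      (natDegree_sub_le _ _).trans (max_le (by rwa [natDegree_taylor]) hp)
    simpa using
      natDegree_le_pred hsub (by rw [coeff_sub, coeff_taylor_of_natDegree_le hp, sub_self])
  · rw [coeff_sub, coeff_taylor_of_natDegree_le_succ hp, hp1]
    field_simp
    ring

theorem mem_of_natDegree_le_of_forall_coeff (htaylor : ∀ p ∈ W, ∀ a, taylor a p ∈ W) {n : ℕ}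
    (hlead : ∀ t, ∃ p ∈ W, p.natDegree ≤ n ∧ p.coeff n = t) {p : K[X]} (hp : p.natDegree ≤ n) :
    p ∈ W := by
  induction n generalizing p with
  | zero =>
    obtain ⟨q, hqW, hq, hqp⟩ := hlead (p.coeff 0)
    rwa [eq_C_of_natDegree_le_zero hp, ← hqp, ← eq_C_of_natDegree_le_zero hq]
  | succ k ih =>
    obtain ⟨q, hqW, hq, hqp⟩ := hlead (p.coeff (k + 1))
    have hpq : (p - q).natDegree ≤ k := by
      simpa using natDegree_le_pred ((natDegree_sub_le _ _).trans (max_le hp hq))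
        (by rw [coeff_sub, hqp, sub_self])
    simpa using add_mem (ih (exists_mem_coeff_eq_of_succ htaylor hlead) hpq) hqW

end Polynomial

theorem AddSubgroup.eq_top_of_range_subset {X : Type*} [TopologicalSpace X] [PreconnectedSpace X]
    {T : AddSubgroup ℝ} {s : X → ℝ} (hs : Continuous s) (hsT : Set.range s ⊆ T) {a b : X}
    (hab : s a ≠ s b) : T = ⊤ := by
  wlog hlt : s a < s b generalizing a b
  · exact this hab.symm (hab.lt_or_gt.resolve_left hlt)
  have hIcc : Set.Icc (s a) (s b) ⊆ T :=
    ((isPreconnected_range hs).Icc_subset ⟨a, rfl⟩ ⟨b, rfl⟩).trans hsT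
  have hopen : IsOpen (T : Set ℝ) :=
    T.isOpen_of_mem_nhds (Filter.mem_of_superset
      (Icc_mem_nhds (left_lt_add_div_two.2 hlt) (add_div_two_lt_right.2 hlt)) hIcc)
  exact AddSubgroup.coe_eq_univ.1 <|
    IsClopen.eq_univ ⟨T.isClosed_of_isOpen hopen, hopen⟩ ⟨0, T.zero_mem⟩

lemma exists_map_add_ne_of_not_linear {ℓ : ℝ → ℝ} (hℓ : Continuous ℓ)
    (hlin : ¬∃ c, ∀ u, ℓ u = c * u) : ∃ a b, ℓ a + ℓ b ≠ ℓ (a + b) := by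
  by_contra! hadd
  refine hlin ⟨ℓ 1, fun u => ?_⟩
  simpa [mul_comm] using map_real_smul (AddMonoidHom.mk' ℓ fun a b => (hadd a b).symm) hℓ u 1

lemma exists_forall_mul_eq_mul_iff_of_isUnit {M : Type*} [CommMonoid M] {ε : M} (hε : IsUnit ε)
    {f : M → M} : (∃ c, ∀ u, ε * f u = c * u) ↔ ∃ c, ∀ u, f u = c * u := by
  obtain ⟨e, rfl⟩ := hε
  refine ⟨fun ⟨c, hc⟩ => ⟨↑e⁻¹ * c, fun u => ?_⟩, fun ⟨c, hc⟩ => ⟨e * c, fun u => ?_⟩⟩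
  · rw [mul_assoc, ← hc, Units.inv_mul_cancel_left]
  · rw [hc, mul_assoc]

section Shear

variable {A B : Type*} [AddCommGroup A] [AddCommGroup B]

def shear (c : A) (f : A → B) : Equiv.Perm (A × B) where
  toFun p := (p.1 + c, p.2 + f p.1)
  invFun p := (p.1 - c, p.2 - f (p.1 - c))
  left_inv p := by simp
  right_inv p := by simp

@[simp]
lemma shear_apply (c : A) (f : A → B) (x : A) (y : B) :
    shear c f (x, y) = (x + c, y + f x) :=
  rfl

lemma eq_shear_iff {σ : Equiv.Perm (A × B)} {c : A} {f : A → B} :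
    σ = shear c f ↔ ∀ x y, σ (x, y) = (x + c, y + f x) :=
  ⟨fun h _ _ => h ▸ rfl, fun h => Equiv.ext fun _ => h _ _⟩

lemma shear_inj {c d : A} {f g : A → B} : shear c f = shear d g ↔ c = d ∧ f = g := by
  refine ⟨fun h => ⟨?_, funext fun x => ?_⟩, fun ⟨hc, hf⟩ => hc ▸ hf ▸ rfl⟩
  · simpa using congrArg Prod.fst (Equiv.congr_fun h (0, 0))
  · simpa using congrArg Prod.snd (Equiv.congr_fun h (x, 0))

@[simp]
lemma shear_zero_zero : shear (0 : A) (fun _ => (0 : B)) = 1 := by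
  ext ⟨x, y⟩ <;> simp

lemma shear_mul (c d : A) (f g : A → B) :
    shear c f * shear d g = shear (c + d) (fun x => g x + f (x + d)) := by
  refine eq_shear_iff.2 fun x y => ?_
  simp only [Equiv.Perm.mul_apply, shear_apply, Prod.mk.injEq]
  constructor <;> abel

lemma shear_inv (c : A) (f : A → B) : (shear c f)⁻¹ = shear (-c) (fun x => -f (x - c)) := by
  rw [inv_eq_iff_mul_eq_one (a := shear c f), shear_mul]
  ext ⟨x, y⟩ <;> simp [sub_eq_add_neg]

end Shear

section PolyShear

variable {R : Type*} [CommRing R]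

lemma shear_eval_mul (c d : R) (p q : R[X]) :
    shear c p.eval * shear d q.eval = shear (c + d) (q + taylor d p).eval := by
  simp only [shear_mul, eval_add, taylor_eval]

lemma shear_eval_inv (c : R) (p : R[X]) :
    (shear c p.eval)⁻¹ = shear (-c) (-taylor (-c) p).eval := by
  simp only [shear_inv, eval_neg, taylor_eval, sub_eq_add_neg]

def polyShearSubgroup (n : ℕ) (S : AddSubgroup (R × R)) : Subgroup (Equiv.Perm (R × R)) where
  carrier := {σ | ∃ (c : R) (p : R[X]), p.natDegree ≤ n ∧ (c, p.coeff n) ∈ S ∧ σ = shear c p.eval}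
  one_mem' := ⟨0, 0, by simp, S.zero_mem, by simp⟩
  mul_mem' := by
    rintro _ _ ⟨c, p, hp, hpS, rfl⟩ ⟨d, q, hq, hqS, rfl⟩
    refine ⟨c + d, q + taylor d p, natDegree_add_le_of_degree_le hq (by rwa [natDegree_taylor]),
      ?_, shear_eval_mul c d p q⟩
    rw [coeff_add, coeff_taylor_of_natDegree_le hp, add_comm (q.coeff n)]
    exact S.add_mem hpS hqS
  inv_mem' := by
    rintro _ ⟨c, p, hp, hpS, rfl⟩
    refine ⟨-c, -taylor (-c) p, by rwa [natDegree_neg, natDegree_taylor], ?_, shear_eval_inv c p⟩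
    rw [coeff_neg, coeff_taylor_of_natDegree_le hp]
    exact S.neg_mem hpS

def verticalShearPolys (G : Subgroup (Equiv.Perm (R × R))) : AddSubgroup R[X] where
  carrier := {p | shear 0 p.eval ∈ G}
  zero_mem' := by
    show shear 0 (0 : R[X]).eval ∈ G
    simp
  add_mem' {p q} hp hq := by
    have := shear_eval_mul 0 0 q p
    rw [taylor_zero, zero_add] at this
    simpa [this] using G.mul_mem hq hp
  neg_mem' {p} hp := by
    have := shear_eval_inv 0 p
    rw [neg_zero, taylor_zero] at this
    simpa [this] using G.inv_mem hp

lemma coe_polyShearSubgroup_top (n : ℕ) :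
    (polyShearSubgroup (R := R) n ⊤ : Set (Equiv.Perm (R × R))) =
      {σ | ∃ (c : R) (p : R[X]), p.natDegree ≤ n ∧ ∀ x y, σ (x, y) = (x + c, y + p.eval x)} := by
  ext σ
  simp [polyShearSubgroup, eq_shear_iff]

variable {G : Subgroup (Equiv.Perm (R × R))}

lemma sub_mem_verticalShearPolys {c : R} {p q : R[X]} (hp : shear c p.eval ∈ G)
    (hq : shear c q.eval ∈ G) : q - p ∈ verticalShearPolys G := by
  have := G.mul_mem (G.inv_mem hp) hq
  rwa [shear_eval_inv, shear_eval_mul, neg_add_cancel, map_neg, taylor_taylor, add_neg_cancel,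
    taylor_zero, ← sub_eq_add_neg] at this

lemma taylor_mem_verticalShearPolys {a : R} {p q : R[X]} (hp : p ∈ verticalShearPolys G)
    (hq : shear a q.eval ∈ G) : taylor a p ∈ verticalShearPolys G := by
  have hpq := G.mul_mem hp hq
  rw [shear_eval_mul, zero_add] at hpq
  simpa using sub_mem_verticalShearPolys hq hpq

end PolyShear

section Generators

variable {R : Type*} [CommRing R]

/-- For `q = loopPoly v` these are the left translations `λ_(u,z)` of `∗`. -/
def loopGenerators (q : R → R[X]) : Set (Equiv.Perm (R × R)) :=
  Set.range fun a : R × R => shear a.1 (C a.2 + q a.1).eval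

lemma closure_loopGenerators_le {q : R → R[X]} {n : ℕ} {S : AddSubgroup (R × R)}
    (hdeg : ∀ u, (q u).natDegree ≤ n) (hS : ∀ u z, (u, (C z + q u).coeff n) ∈ S) :
    Subgroup.closure (loopGenerators q) ≤ polyShearSubgroup n S := by
  rw [Subgroup.closure_le]
  rintro _ ⟨⟨u, z⟩, rfl⟩
  exact ⟨u, C z + q u, natDegree_add_le_of_degree_le (by simp) (hdeg u), hS u z, rfl⟩

theorem closure_loopGenerators_ne_of_coeff_eq_mul [IsDomain R] [Infinite R] {q : R → R[X]}
    {n : ℕ} (hn : n ≠ 0) (hdeg : ∀ u, (q u).natDegree ≤ n) {c : R}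
    (hc : ∀ u, (q u).coeff n = c * u) :
    Subgroup.closure (loopGenerators q) ≠ polyShearSubgroup n ⊤ := by
  intro h
  have hline : Subgroup.closure (loopGenerators q) ≤
      polyShearSubgroup n (AddMonoidHom.mulLeft c).graph :=
    closure_loopGenerators_le hdeg fun u z => by simp [AddMonoidHom.mem_graph, coeff_C, hn, hc]
  have hXn : shear 0 (X ^ n : R[X]).eval ∈ polyShearSubgroup n ⊤ :=
    ⟨0, X ^ n, natDegree_X_pow_le n, trivial, rfl⟩
  obtain ⟨d, p, -, hpc, hp⟩ := hline (h ▸ hXn)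
  obtain ⟨rfl, hpX⟩ := shear_inj.1 hp
  obtain rfl : p = X ^ n := Polynomial.funext (congrFun hpX.symm)
  simp [AddMonoidHom.mem_graph] at hpc

end Generators

section RealGenerators

variable {q : ℝ → ℝ[X]} {n : ℕ} {G : Subgroup (Equiv.Perm (ℝ × ℝ))}

lemma exists_mem_verticalShearPolys_coeff_eq (hgen : ∀ u, shear u (q u).eval ∈ G)
    (hdeg : ∀ u, (q u).natDegree ≤ n) (hcont : Continuous fun u => (q u).coeff n)
    (hq0 : (q 0).coeff n = 0) (hlin : ¬∃ c, ∀ u, (q u).coeff n = c * u) (t : ℝ) :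
    ∃ p ∈ verticalShearPolys G, p.natDegree ≤ n ∧ p.coeff n = t := by
  set T := (verticalShearPolys G ⊓ (degreeLE ℝ n).toAddSubgroup).map (lcoeff ℝ n).toAddMonoidHom
  obtain ⟨u₀, u₁, hne⟩ := exists_map_add_ne_of_not_linear hcont hlin
  set s : ℝ → ℝ := fun u => (q u₁).coeff n + (q u).coeff n - (q (u + u₁)).coeff n
  have hmem : ∀ p : ℝ[X], p.natDegree ≤ n → p ∈ degreeLE ℝ n := fun p hp =>
    mem_degreeLE.2 (natDegree_le_iff_degree_le.1 hp)
  have hsT : Set.range s ⊆ T := by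
    rintro _ ⟨u, rfl⟩
    have hdefect : q u₁ + taylor u₁ (q u) - q (u + u₁) ∈ verticalShearPolys G :=
      sub_mem_verticalShearPolys (hgen _) (shear_eval_mul u u₁ _ _ ▸ G.mul_mem (hgen u) (hgen u₁))
    have hdefect_deg : q u₁ + taylor u₁ (q u) - q (u + u₁) ∈ degreeLE ℝ n :=
      sub_mem (add_mem (hmem _ (hdeg _)) (hmem _ ((natDegree_taylor _ _).trans_le (hdeg u))))
        (hmem _ (hdeg _))
    exact ⟨_, ⟨hdefect, hdefect_deg⟩, by simp [s, coeff_taylor_of_natDegree_le (hdeg _)]⟩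
  have hs : Continuous s := (continuous_const.add hcont).sub (hcont.comp (continuous_add_const u₁))
  have hT : T = ⊤ := AddSubgroup.eq_top_of_range_subset hs hsT (a := 0) (b := u₀) fun h => by
    simp only [s, hq0, zero_add, add_zero, sub_self] at h
    exact hne (by linarith)
  obtain ⟨p, ⟨hpW, hp⟩, rfl⟩ := AddSubgroup.mem_map.1 (hT ▸ AddSubgroup.mem_top t)
  exact ⟨p, hpW, natDegree_le_iff_degree_le.2 (mem_degreeLE.1 hp), rfl⟩

theorem polyShearSubgroup_le_of_forall_shear_mem (hgen : ∀ u, shear u (q u).eval ∈ G)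
    (hdeg : ∀ u, (q u).natDegree ≤ n) (hcont : Continuous fun u => (q u).coeff n)
    (hq0 : (q 0).coeff n = 0) (hlin : ¬∃ c, ∀ u, (q u).coeff n = c * u) :
    polyShearSubgroup n ⊤ ≤ G := by
  rintro _ ⟨c, p, hp, -, rfl⟩
  have hpW : p - q c ∈ verticalShearPolys G :=
    mem_of_natDegree_le_of_forall_coeff (fun p hp a => taylor_mem_verticalShearPolys hp (hgen a))
      (exists_mem_verticalShearPolys_coeff_eq hgen hdeg hcont hq0 hlin)
      ((natDegree_sub_le _ _).trans (max_le hp (hdeg c)))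
  have hfactor := shear_eval_mul c 0 (q c) (p - q c)
  rw [add_zero, taylor_zero, sub_add_cancel] at hfactor
  exact hfactor ▸ G.mul_mem (hgen c) hpW

theorem closure_loopGenerators_eq_iff (hn : n ≠ 0) (hdeg : ∀ u, (q u).natDegree ≤ n)
    (hcont : Continuous fun u => (q u).coeff n) (hq0 : (q 0).coeff n = 0) :
    Subgroup.closure (loopGenerators q) = polyShearSubgroup n ⊤ ↔
      ¬∃ c, ∀ u, (q u).coeff n = c * u := by
  refine ⟨fun h ⟨_, hc⟩ => closure_loopGenerators_ne_of_coeff_eq_mul hn hdeg hc h, fun hlin => ?_⟩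
  have hgen : ∀ u, shear u (q u).eval ∈ Subgroup.closure (loopGenerators q) := fun u =>
    Subgroup.subset_closure ⟨(u, 0), by simp⟩
  exact le_antisymm (closure_loopGenerators_le hdeg fun _ _ => trivial)
    (polyShearSubgroup_le_of_forall_shear_mem hgen hdeg hcont hq0 hlin)

end RealGenerators

section LoopPoly

variable {R : Type*} [CommRing R] {n : ℕ} (v : Fin n → R → R)

noncomputable def loopPoly (u : R) : R[X] :=
  ∑ i : Fin n, C ((-1) ^ (i.val + 1) * v i u) * X ^ (i.val + 1)

lemma eval_loopPoly (u x : R) :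
    (loopPoly v u).eval x = ∑ i : Fin n, (-1) ^ (i.val + 1) * x ^ (i.val + 1) * v i u := by
  simp only [loopPoly, eval_finsetSum, eval_mul, eval_C, eval_pow, eval_X]
  exact Finset.sum_congr rfl fun _ _ => by ring

lemma natDegree_loopPoly_le (u : R) : (loopPoly v u).natDegree ≤ n :=
  natDegree_sum_le_of_forall_le _ _ fun i _ =>
    (natDegree_C_mul_le _ _).trans ((natDegree_X_pow_le _).trans i.isLt)

lemma coeff_loopPoly_succ (u : R) (i : Fin n) :
    (loopPoly v u).coeff (i.val + 1) = (-1) ^ (i.val + 1) * v i u := by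
  rw [loopPoly, finsetSum_coeff, Finset.sum_eq_single i]
  · rw [coeff_C_mul_X_pow, if_pos rfl]
  · intro j _ hji
    rw [coeff_C_mul_X_pow, if_neg fun h => hji (Fin.ext (by omega))]
  · simp

end LoopPoly

/-- Let `n ≥ 1` and let `v₁, …, vₙ : ℝ → ℝ` be continuous with `vᵢ(0) = 0`, with the
loop operation `∗` on `ℝ × ℝ` given by
`(u₁,z₁) ∗ (u₂,z₂) = (u₁+u₂, z₁+z₂ − u₂ v₁(u₁) + ⋯ + (−1)ⁿ u₂ⁿ vₙ(u₁))`.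
The subgroup of `Perm (ℝ × ℝ)` generated by all left translations of `∗` equals
the group `Mₙ` of all permutations `(x, y) ↦ (x + c, y + p(x))` with `c ∈ ℝ`
and `p` a polynomial of degree at most `n`, iff `vₙ` is non-linear. -/
theorem stmt14
    (n : ℕ) (hn : 1 ≤ n)
    (v : Fin n → ℝ → ℝ) (hv0 : ∀ i, v i 0 = 0) (hvc : ∀ i, Continuous (v i))
    (mul : ℝ × ℝ → ℝ × ℝ → ℝ × ℝ)
    (hmul : ∀ a b : ℝ × ℝ, mul a b =
      (a.1 + b.1,
        a.2 + b.2 + ∑ i : Fin n, (-1 : ℝ) ^ ((i : ℕ) + 1) * b.1 ^ ((i : ℕ) + 1) * v i a.1)) :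
    ((Subgroup.closure
        {f : Equiv.Perm (ℝ × ℝ) | ∃ a : ℝ × ℝ, ∀ x, f x = mul a x} :
        Subgroup (Equiv.Perm (ℝ × ℝ))) : Set (Equiv.Perm (ℝ × ℝ))) =
      {f : Equiv.Perm (ℝ × ℝ) | ∃ c : ℝ, ∃ p : Polynomial ℝ, p.natDegree ≤ n ∧
        ∀ x y : ℝ, f (x, y) = (x + c, y + p.eval x)} ↔
      ¬∃ c : ℝ, ∀ u : ℝ, v ⟨n - 1, by omega⟩ u = c * u := by
  set i : Fin n := ⟨n - 1, by omega⟩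
  have hgen : {f : Equiv.Perm (ℝ × ℝ) | ∃ a : ℝ × ℝ, ∀ x, f x = mul a x} =
      loopGenerators (loopPoly v) := by
    ext f
    simp only [Set.mem_ofPred_eq, loopGenerators, Set.mem_range, eq_comm (b := f), eq_shear_iff]
    refine exists_congr fun a => ⟨fun h x y => ?_, fun h ⟨x, y⟩ => ?_⟩
    all_goals
      rw [h, hmul, eval_add, eval_C, eval_loopPoly, Prod.mk.injEq]
      constructor <;> ring
  have hcoeff : ∀ u, (loopPoly v u).coeff n = (-1) ^ n * v i u := by
    simpa [i, Nat.sub_add_cancel hn] using (coeff_loopPoly_succ v · i)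
  rw [hgen, ← coe_polyShearSubgroup_top, SetLike.coe_set_eq,
    closure_loopGenerators_eq_iff (by omega) (natDegree_loopPoly_le v)
      (by simp only [hcoeff]; exact continuous_const.mul (hvc i)) (by rw [hcoeff, hv0, mul_zero])]
  simp only [hcoeff, exists_forall_mul_eq_mul_iff_of_isUnit (isUnit_neg_one.pow n)]
end
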